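/- arXiv:1201.1861 — 10 statements merged into one kernel-verified Lean document; each statement's English description precedes it below -/
import Mathlib

section
/- Let p > 0 and q > 0 be real numbers. Define F : ℝ² → ℝ by F(κ, z) = κz/(pκ + qz) when pκ + qz ≠ 0 and F(κ, z) = 0 when pκ + qz = 0. Then F is concave on the closed positive quadrant {(κ, z) ∈ ℝ² : κ ≥ 0 and z ≥ 0}. -/
/-- The per-user sensing performance term
`F(κ, z) = κz/(pκ + qz)` (with `F(κ,z) = 0` when `pκ + qz = 0`) is concave
on the closed positive quadrant, for constants `p, q > 0`. -/
theorem stmt_0 (p q : ℝ) (hp : 0 < p) (hq : 0 < q) :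
    ConcaveOn ℝ {x : ℝ × ℝ | 0 ≤ x.1 ∧ 0 ≤ x.2}
      (fun x : ℝ × ℝ =>
        if p * x.1 + q * x.2 = 0 then 0 else x.1 * x.2 / (p * x.1 + q * x.2)) := by
  constructor
  · intro x hx y hy a b ha hb hab
    obtain ⟨hx1, hx2⟩ := hx
    obtain ⟨hy1, hy2⟩ := hy
    constructor
    · simp only [Prod.fst_add, Prod.smul_fst, smul_eq_mul]
      positivity
    · simp only [Prod.snd_add, Prod.smul_snd, smul_eq_mul]
      positivity
  · intro x hx y hy a b ha hb hab
    obtain ⟨hx1, hx2⟩ := hx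
    obtain ⟨hy1, hy2⟩ := hy
    simp only [smul_eq_mul, Prod.fst_add, Prod.snd_add, Prod.smul_fst, Prod.smul_snd]
    by_cases hxd : p * x.1 + q * x.2 = 0
    · have hx1' : x.1 = 0 := by nlinarith
      have hx2' : x.2 = 0 := by nlinarith
      rw [hx1', hx2']
      by_cases hyd : p * y.1 + q * y.2 = 0
      · have hy1' : y.1 = 0 := by nlinarith
        have hy2' : y.2 = 0 := by nlinarith
        simp [hy1', hy2', hxd]
      · simp only [hxd, if_pos, if_neg hyd, smul_eq_mul, mul_zero, zero_add, mul_zero,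
          zero_mul]
        rcases eq_or_lt_of_le hb with hb0 | hb0
        · simp [← hb0]
        · have hD2 : 0 < p * y.1 + q * y.2 := by
            rcases lt_or_eq_of_le (by positivity : (0:ℝ) ≤ p * y.1 + q * y.2) with h | h
            · exact h
            · exact absurd h.symm hyd
          have hden : p * (b * y.1) + q * (b * y.2) = b * (p * y.1 + q * y.2) := by
            ring
          have hdne : p * (b * y.1) + q * (b * y.2) ≠ 0 := by
            rw [hden]; positivity
          rw [if_neg hdne, hden, ← mul_div_assoc, div_le_div_iff₀ hD2 (by positivity)]
          nlinarith [mul_pos hD2 hb0]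
    · have hD1 : 0 < p * x.1 + q * x.2 := by
        rcases lt_or_eq_of_le (by positivity : (0:ℝ) ≤ p * x.1 + q * x.2) with h | h
        · exact h
        · exact absurd h.symm hxd
      rw [if_neg hxd]
      by_cases hyd : p * y.1 + q * y.2 = 0
      · have hy1' : y.1 = 0 := by nlinarith
        have hy2' : y.2 = 0 := by nlinarith
        rw [hy1', hy2']
        simp only [mul_zero, add_zero, if_pos, smul_eq_mul]
        rcases eq_or_lt_of_le ha with ha0 | ha0
        · simp [← ha0, hxd]
        · have hden : p * (a * x.1) + q * (a * x.2) = a * (p * x.1 + q * x.2) := by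
            ring
          have hdne : p * (a * x.1) + q * (a * x.2) ≠ 0 := by
            rw [hden]; positivity
          rw [if_neg hdne, hden, ← mul_div_assoc, div_le_div_iff₀ hD1 (by positivity)]
          nlinarith [mul_pos hD1 ha0]
      · have hD2 : 0 < p * y.1 + q * y.2 := by
          rcases lt_or_eq_of_le (by positivity : (0:ℝ) ≤ p * y.1 + q * y.2) with h | h
          · exact h
          · exact absurd h.symm hyd
        rw [if_neg hyd]
        have hD : 0 < p * (a * x.1 + b * y.1) + q * (a * x.2 + b * y.2) := by
          rcases eq_or_lt_of_le ha with ha0 | ha0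
          · have hb1 : b = 1 := by linarith
            rw [← ha0, hb1]; ring_nf; nlinarith
          · nlinarith [mul_nonneg hb (mul_nonneg hy1 hp.le), mul_nonneg hb hy2,
              mul_pos ha0 hD1, mul_nonneg hb (mul_nonneg hq.le hy2)]
        rw [if_neg (ne_of_gt hD), ← mul_div_assoc, ← mul_div_assoc,
          div_add_div _ _ (ne_of_gt hD1) (ne_of_gt hD2), div_le_div_iff₀ (by positivity) hD]
        nlinarith [mul_nonneg (mul_nonneg (mul_nonneg (mul_nonneg ha hb) hp.le) hq.le)
          (sq_nonneg (x.1 * y.2 - x.2 * y.1)), sq_nonneg (a + b)]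
end

section
/- Fix n ≥ 1 and positive reals c₀, C̄, and for each i ∈ {1,…,n} positive reals ξᵢ, γᵢ, hᵢ, and σ̃ > 0. Let D = {(κ, z) ∈ ℝⁿ × ℝⁿ : κᵢ ≥ 0, zᵢ ≥ 0 for all i, and c₀·∑ᵢ κᵢ + ∑ᵢ ξᵢ zᵢ ≤ C̄}, and let G(κ, z) = ∑_{i=1}^n κᵢ zᵢ γᵢ² hᵢ² / (zᵢ hᵢ² + κᵢ σ̃²), with the convention that a term equals 0 when κᵢ = zᵢ = 0. If (κ, z) ∈ D maximizes G over D, then for every i one has κᵢ = 0 if and only if zᵢ = 0 (equivalently, either κᵢ > 0 and zᵢ > 0, or κᵢ = 0 and zᵢ = 0). -/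
open Finset

/-- Sensing deflection `G(κ, z) = ∑ᵢ κᵢ zᵢ γᵢ² hᵢ² / (zᵢ hᵢ² + κᵢ σ̃²)`,
with the convention that a term equals `0` when `κᵢ = zᵢ = 0`. -/
noncomputable def deflection (n : ℕ) (σ : ℝ) (γ h : Fin n → ℝ)
    (κ z : Fin n → ℝ) : ℝ :=
  ∑ i, if κ i = 0 ∧ z i = 0 then 0
    else κ i * z i * (γ i) ^ 2 * (h i) ^ 2 / (z i * (h i) ^ 2 + κ i * σ ^ 2)

/-- Lemma 1: at a maximizer of the deflection over the
cost-constrained feasible set, for each secondary user, `κᵢ = 0` iff `zᵢ = 0`. -/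
theorem stmt_2 (n : ℕ) (hn : 1 ≤ n) (c₀ C σ : ℝ) (ξ γ h : Fin n → ℝ)
    (hc₀ : 0 < c₀) (hC : 0 < C) (hσ : 0 < σ)
    (hξ : ∀ i, 0 < ξ i) (hγ : ∀ i, 0 < γ i) (hh : ∀ i, 0 < h i)
    (κ z : Fin n → ℝ)
    (hκ : ∀ i, 0 ≤ κ i) (hz : ∀ i, 0 ≤ z i)
    (hcost : c₀ * ∑ i, κ i + ∑ i, ξ i * z i ≤ C)
    (hmax : ∀ κ' z' : Fin n → ℝ, (∀ i, 0 ≤ κ' i) → (∀ i, 0 ≤ z' i) →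
      c₀ * ∑ i, κ' i + ∑ i, ξ i * z' i ≤ C →
      deflection n σ γ h κ' z' ≤ deflection n σ γ h κ z) :
    ∀ i, κ i = 0 ↔ z i = 0 := by
  intro i
  by_contra hiff
  have hne : (κ i = 0 ∧ z i ≠ 0) ∨ (κ i ≠ 0 ∧ z i = 0) := by
    by_cases h1 : κ i = 0 <;> by_cases h2 : z i = 0 <;> simp_all
  have hprod : κ i * z i = 0 := by
    rcases hne with ⟨h1, _⟩ | ⟨_, h1⟩ <;> simp [h1]
  set b := c₀ * κ i + ξ i * z i with hb
  have hbpos : 0 < b := by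
    rcases hne with ⟨h1, h2⟩ | ⟨h1, h2⟩
    · have hzpos : 0 < z i := (hz i).lt_of_ne (Ne.symm h2)
      have := mul_pos (hξ i) hzpos
      simp [hb, h1]; linarith
    · have hκpos : 0 < κ i := (hκ i).lt_of_ne (Ne.symm h1)
      have := mul_pos hc₀ hκpos
      simp [hb, h2]; linarith
  set a := b / (2 * c₀) with ha
  set d := b / (2 * ξ i) with hd
  have hapos : 0 < a := div_pos hbpos (by positivity)
  have hdpos : 0 < d := div_pos hbpos (by have := hξ i; positivity)
  set κ' := Function.update κ i a with hκ'def
  set z' := Function.update z i d with hz'def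
  have hκ'i : κ' i = a := by simp [hκ'def]
  have hz'i : z' i = d := by simp [hz'def]
  have hκ'nn : ∀ j, 0 ≤ κ' j := by
    intro j
    rcases eq_or_ne j i with rfl | hji
    · simpa [hκ'i] using hapos.le
    · simpa [hκ'def, Function.update_of_ne hji] using hκ j
  have hz'nn : ∀ j, 0 ≤ z' j := by
    intro j
    rcases eq_or_ne j i with rfl | hji
    · simpa [hz'i] using hdpos.le
    · simpa [hz'def, Function.update_of_ne hji] using hz j
  -- sums
  have hsumκ : ∑ j, κ' j = a + ∑ j ∈ univ.erase i, κ j := by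
    rw [← Finset.add_sum_erase _ _ (mem_univ i)]
    congr 1
    · exact Finset.sum_congr rfl fun j hj => by
        simp [hκ'def, Function.update_of_ne (Finset.ne_of_mem_erase hj)]
  have hsumz : ∑ j, ξ j * z' j = ξ i * d + ∑ j ∈ univ.erase i, ξ j * z j := by
    rw [← Finset.add_sum_erase _ (fun j => ξ j * z' j) (mem_univ i)]
    congr 1
    · rw [hz'i]
    · exact Finset.sum_congr rfl fun j hj => by
        rw [hz'def, Function.update_of_ne (Finset.ne_of_mem_erase hj)]
  have hκsplit : ∑ j, κ j = κ i + ∑ j ∈ univ.erase i, κ j :=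
    (Finset.add_sum_erase _ _ (mem_univ i)).symm
  have hzsplit : ∑ j, ξ j * z j = ξ i * z i + ∑ j ∈ univ.erase i, ξ j * z j :=
    (Finset.add_sum_erase _ _ (mem_univ i)).symm
  have hca : c₀ * a = b / 2 := by
    rw [ha]; field_simp
  have hxd : ξ i * d = b / 2 := by
    have hξi : ξ i ≠ 0 := (hξ i).ne'
    rw [hd]; field_simp
  have hcost' : c₀ * ∑ j, κ' j + ∑ j, ξ j * z' j ≤ C := by
    have : c₀ * ∑ j, κ' j + ∑ j, ξ j * z' j
        = c₀ * ∑ j, κ j + ∑ j, ξ j * z j := by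
      rw [hsumκ, hsumz, hκsplit, hzsplit, mul_add, mul_add]
      have hab : c₀ * a + ξ i * d = c₀ * κ i + ξ i * z i := by
        rw [hca, hxd]; rw [hb]; ring
      linarith [hab]
    linarith [this ▸ hcost]
  -- deflections
  have hterm : (if κ i = 0 ∧ z i = 0 then (0:ℝ)
      else κ i * z i * (γ i) ^ 2 * (h i) ^ 2 / (z i * (h i) ^ 2 + κ i * σ ^ 2)) = 0 := by
    split
    · rfl
    · rw [hprod]; simp
  have hterm' : (0:ℝ) < (if κ' i = 0 ∧ z' i = 0 then (0:ℝ)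
      else κ' i * z' i * (γ i) ^ 2 * (h i) ^ 2 / (z' i * (h i) ^ 2 + κ' i * σ ^ 2)) := by
    rw [hκ'i, hz'i, if_neg (by push_neg; intro h'; exact absurd h' hapos.ne')]
    have h1 := hγ i
    have h2 := hh i
    apply div_pos
    · positivity
    · positivity
  have hdefl : deflection n σ γ h κ z + (if κ' i = 0 ∧ z' i = 0 then (0:ℝ)
      else κ' i * z' i * (γ i) ^ 2 * (h i) ^ 2 / (z' i * (h i) ^ 2 + κ' i * σ ^ 2))
      = deflection n σ γ h κ' z' := by
    unfold deflection
    rw [← Finset.add_sum_erase _ (fun j => if κ j = 0 ∧ z j = 0 then (0:ℝ)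
        else κ j * z j * (γ j) ^ 2 * (h j) ^ 2 / (z j * (h j) ^ 2 + κ j * σ ^ 2)) (mem_univ i),
      ← Finset.add_sum_erase _ (fun j => if κ' j = 0 ∧ z' j = 0 then (0:ℝ)
        else κ' j * z' j * (γ j) ^ 2 * (h j) ^ 2 / (z' j * (h j) ^ 2 + κ' j * σ ^ 2)) (mem_univ i)]
    have heq : ∑ j ∈ univ.erase i, (if κ j = 0 ∧ z j = 0 then (0:ℝ)
        else κ j * z j * (γ j) ^ 2 * (h j) ^ 2 / (z j * (h j) ^ 2 + κ j * σ ^ 2))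
        = ∑ j ∈ univ.erase i, (if κ' j = 0 ∧ z' j = 0 then (0:ℝ)
        else κ' j * z' j * (γ j) ^ 2 * (h j) ^ 2 / (z' j * (h j) ^ 2 + κ' j * σ ^ 2)) := by
      refine Finset.sum_congr rfl fun j hj => ?_
      have hji := Finset.ne_of_mem_erase hj
      simp [hκ'def, hz'def, Function.update_of_ne hji]
    rw [heq, hterm]
    ring
  have hle := hmax κ' z' hκ'nn hz'nn hcost'
  linarith
end

section
/- Fix n ≥ 1 and positive reals c₀, C̄, and for each i ∈ {1,…,n} positive reals ξᵢ, γᵢ, hᵢ, and σ̃ > 0. Let D = {(κ, z) ∈ ℝⁿ × ℝⁿ : κᵢ ≥ 0, zᵢ ≥ 0 for all i, and c₀·∑ᵢ κᵢ + ∑ᵢ ξᵢ zᵢ ≤ C̄}, and let G(κ, z) = ∑_{i=1}^n κᵢ zᵢ γᵢ² hᵢ² / (zᵢ hᵢ² + κᵢ σ̃²), with the convention that a term equals 0 when κᵢ = zᵢ = 0. Define ρᵢ = γᵢ² hᵢ² / (σ̃·√ξᵢ + hᵢ·√c₀)². Then the supremum of G over D equals C̄ · maxᵢ ρᵢ, and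 it is attained at the single-user allocation in which, for an index j achieving maxᵢ ρᵢ, κⱼ = hⱼ C̄ / (σ̃·√(ξⱼ c₀) + hⱼ c₀), zⱼ = σ̃ C̄ / (σ̃ ξⱼ + hⱼ √(ξⱼ c₀)), and κᵢ = zᵢ = 0 for all i ≠ j. -/
open Finset

/-!
Each user's term is bounded by its rate `ρᵢ` times the cost `c₀κᵢ + ξᵢzᵢ` it spends: by
Cauchy–Schwarz, `κz(σ√ξ + h√c₀)² ≤ (c₀κ + ξz)(zh² + κσ²)`. Summing, `G ≤ maxᵢ ρᵢ · cost ≤ C̄ maxᵢ ρᵢ`,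
so the whole budget is best spent on one user of largest rate, and for that user equality holds in
Cauchy–Schwarz at `√c₀ σ κ = √ξ h z`, which together with `c₀κ + ξz = C̄` gives the stated allocation.
-/

open Real

-- The convention for `κᵢ = zᵢ = 0` is the one `x / 0 = 0` gives anyway.
lemma deflection_eq_sum_div (n : ℕ) (σ : ℝ) (γ h κ z : Fin n → ℝ) :
    deflection n σ γ h κ z =
      ∑ i, κ i * z i * γ i ^ 2 * h i ^ 2 / (z i * h i ^ 2 + κ i * σ ^ 2) := by
  refine sum_congr rfl fun i _ => ?_
  split_ifs with h0
  · simp [h0.1, h0.2]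
  · rfl

lemma deflection_eq_of_single {n : ℕ} (σ : ℝ) (γ h κ z : Fin n → ℝ) (j : Fin n)
    (hκ : ∀ i, i ≠ j → κ i = 0) (hz : ∀ i, i ≠ j → z i = 0) :
    deflection n σ γ h κ z = κ j * z j * γ j ^ 2 * h j ^ 2 / (z j * h j ^ 2 + κ j * σ ^ 2) := by
  rw [deflection_eq_sum_div, sum_eq_single j (fun i _ hij => by simp [hκ i hij, hz i hij])
    (fun hj => absurd (mem_univ j) hj)]

-- The gap is the square `(bσκ - ahz)²`.
lemma mul_mul_sq_add_le (a b σ h κ z : ℝ) :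
    κ * z * (σ * a + h * b) ^ 2 ≤ (b ^ 2 * κ + a ^ 2 * z) * (z * h ^ 2 + κ * σ ^ 2) := by
  nlinarith [sq_nonneg (b * σ * κ - a * h * z)]

lemma div_le_rate_mul_cost {c₀ ξ σ γ h κ z : ℝ} (hc₀ : 0 ≤ c₀) (hξ : 0 ≤ ξ)
    (hS : 0 < σ * √ξ + h * √c₀) (hκ : 0 ≤ κ) (hz : 0 ≤ z) :
    κ * z * γ ^ 2 * h ^ 2 / (z * h ^ 2 + κ * σ ^ 2) ≤
      γ ^ 2 * h ^ 2 / (σ * √ξ + h * √c₀) ^ 2 * (c₀ * κ + ξ * z) := by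
  rcases (by positivity : 0 ≤ z * h ^ 2 + κ * σ ^ 2).eq_or_lt with hD | hD
  · rw [← hD, div_zero]
    positivity
  have hcs := mul_mul_sq_add_le (√ξ) (√c₀) σ h κ z
  rw [sq_sqrt hc₀, sq_sqrt hξ] at hcs
  rw [div_mul_eq_mul_div, div_le_div_iff₀ hD (by positivity)]
  nlinarith [mul_le_mul_of_nonneg_left hcs (by positivity : 0 ≤ γ ^ 2 * h ^ 2)]

lemma deflection_le_of_cost_le {n : ℕ} {c₀ C σ : ℝ} {ξ γ h ρ κ z : Fin n → ℝ} {j : Fin n}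
    (hc₀ : 0 < c₀) (hσ : 0 < σ) (hξ : ∀ i, 0 < ξ i) (hh : ∀ i, 0 < h i)
    (hρ : ∀ i, ρ i = γ i ^ 2 * h i ^ 2 / (σ * √(ξ i) + h i * √c₀) ^ 2)
    (hj : ∀ i, ρ i ≤ ρ j) (hκ : ∀ i, 0 ≤ κ i) (hz : ∀ i, 0 ≤ z i)
    (hcost : c₀ * ∑ i, κ i + ∑ i, ξ i * z i ≤ C) :
    deflection n σ γ h κ z ≤ C * ρ j := by
  have hcost_i (i : Fin n) : 0 ≤ c₀ * κ i + ξ i * z i :=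
    add_nonneg (mul_nonneg hc₀.le (hκ i)) (mul_nonneg (hξ i).le (hz i))
  have hρj : 0 ≤ ρ j := by rw [hρ j]; positivity
  calc deflection n σ γ h κ z
      ≤ ∑ i, ρ i * (c₀ * κ i + ξ i * z i) := by
        rw [deflection_eq_sum_div]
        refine sum_le_sum fun i _ => ?_
        have hS : 0 < σ * √(ξ i) + h i * √c₀ := by
          have hhi := hh i; have hξi := hξ i; positivity
        rw [hρ i]
        exact div_le_rate_mul_cost hc₀.le (hξ i).le hS (hκ i) (hz i)
    _ ≤ ∑ i, ρ j * (c₀ * κ i + ξ i * z i) :=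
        sum_le_sum fun i _ => mul_le_mul_of_nonneg_right (hj i) (hcost_i i)
    _ = ρ j * (c₀ * ∑ i, κ i + ∑ i, ξ i * z i) := by
        rw [← mul_sum, sum_add_distrib, ← mul_sum]
    _ ≤ C * ρ j := by rw [mul_comm C]; exact mul_le_mul_of_nonneg_left hcost hρj

section SingleUser

variable {c₀ ξ σ h : ℝ}

lemma single_user_cost (hc₀ : 0 < c₀) (hξ : 0 < ξ) (hσ : 0 < σ) (hh : 0 < h) (C : ℝ) :
    c₀ * (h * C / (σ * √(ξ * c₀) + h * c₀)) + ξ * (σ * C / (σ * ξ + h * √(ξ * c₀))) = C := by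
  obtain ⟨a, ha, rfl⟩ : ∃ a, 0 < a ∧ a ^ 2 = ξ := ⟨√ξ, sqrt_pos.mpr hξ, sq_sqrt hξ.le⟩
  obtain ⟨b, hb, rfl⟩ : ∃ b, 0 < b ∧ b ^ 2 = c₀ := ⟨√c₀, sqrt_pos.mpr hc₀, sq_sqrt hc₀.le⟩
  rw [← mul_pow, sqrt_sq (by positivity)]
  field_simp
  ring

lemma single_user_value (hc₀ : 0 < c₀) (hξ : 0 < ξ) (hσ : 0 < σ) (hh : 0 < h) {C : ℝ}
    (hC : 0 < C) (γ : ℝ) :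
    let κ := h * C / (σ * √(ξ * c₀) + h * c₀)
    let z := σ * C / (σ * ξ + h * √(ξ * c₀))
    κ * z * γ ^ 2 * h ^ 2 / (z * h ^ 2 + κ * σ ^ 2) =
      C * (γ ^ 2 * h ^ 2 / (σ * √ξ + h * √c₀) ^ 2) := by
  obtain ⟨a, ha, rfl⟩ : ∃ a, 0 < a ∧ a ^ 2 = ξ := ⟨√ξ, sqrt_pos.mpr hξ, sq_sqrt hξ.le⟩
  obtain ⟨b, hb, rfl⟩ : ∃ b, 0 < b ∧ b ^ 2 = c₀ := ⟨√c₀, sqrt_pos.mpr hc₀, sq_sqrt hc₀.le⟩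
  simp only [← mul_pow, sqrt_sq (mul_pos ha hb).le, sqrt_sq ha.le, sqrt_sq hb.le]
  field_simp
  ring

end SingleUser

theorem stmt_3_general (n : ℕ) (c₀ C σ : ℝ) (ξ γ h : Fin n → ℝ)
    (hc₀ : 0 < c₀) (hC : 0 < C) (hσ : 0 < σ)
    (hξ : ∀ i, 0 < ξ i) (hh : ∀ i, 0 < h i)
    (ρ : Fin n → ℝ)
    (hρ : ∀ i, ρ i = (γ i) ^ 2 * (h i) ^ 2 /
      (σ * Real.sqrt (ξ i) + h i * Real.sqrt c₀) ^ 2)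
    (j : Fin n) (hj : ∀ i, ρ i ≤ ρ j)
    (κopt zopt : Fin n → ℝ)
    (hκopt : κopt = fun i =>
      if i = j then h j * C / (σ * Real.sqrt (ξ j * c₀) + h j * c₀) else 0)
    (hzopt : zopt = fun i =>
      if i = j then σ * C / (σ * ξ j + h j * Real.sqrt (ξ j * c₀)) else 0) :
    ((∀ i, 0 ≤ κopt i) ∧ (∀ i, 0 ≤ zopt i) ∧
      c₀ * ∑ i, κopt i + ∑ i, ξ i * zopt i ≤ C) ∧
    deflection n σ γ h κopt zopt = C * ρ j ∧
    (∀ κ z : Fin n → ℝ, (∀ i, 0 ≤ κ i) → (∀ i, 0 ≤ z i) →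
      c₀ * ∑ i, κ i + ∑ i, ξ i * z i ≤ C →
      deflection n σ γ h κ z ≤ C * ρ j) := by
  subst hκopt hzopt
  have hhj := hh j
  have hξj := hξ j
  refine ⟨⟨fun i => ?_, fun i => ?_, ?_⟩, ?_,
    fun κ z hκ hz hcost => deflection_le_of_cost_le hc₀ hσ hξ hh hρ hj hκ hz hcost⟩
  · dsimp only; split_ifs <;> positivity
  · dsimp only; split_ifs <;> positivity
  · simp only [sum_ite_eq', mem_univ, if_true, mul_ite, mul_zero]
    exact (single_user_cost hc₀ (hξ j) hσ (hh j) C).le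
  · rw [deflection_eq_of_single σ γ h _ _ j (fun i hi => if_neg hi) (fun i hi => if_neg hi), hρ j]
    simpa only [if_pos] using single_user_value hc₀ (hξ j) hσ (hh j) hC (γ j)

/-- Theorem 1: with `ρᵢ = γᵢ² hᵢ² / (σ̃√ξᵢ + hᵢ√c₀)²`, the
supremum of the deflection over the cost-constrained feasible set equals
`C̄ · maxᵢ ρᵢ`, and it is attained at the single-user allocation in which only
a user `j` achieving `maxᵢ ρᵢ` is active, with
`κⱼ = hⱼ C̄ / (σ̃√(ξⱼc₀) + hⱼc₀)` and `zⱼ = σ̃ C̄ / (σ̃ξⱼ + hⱼ√(ξⱼc₀))`. -/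
theorem stmt_3 (n : ℕ) (hn : 1 ≤ n) (c₀ C σ : ℝ) (ξ γ h : Fin n → ℝ)
    (hc₀ : 0 < c₀) (hC : 0 < C) (hσ : 0 < σ)
    (hξ : ∀ i, 0 < ξ i) (hγ : ∀ i, 0 < γ i) (hh : ∀ i, 0 < h i)
    (ρ : Fin n → ℝ)
    (hρ : ∀ i, ρ i = (γ i) ^ 2 * (h i) ^ 2 /
      (σ * Real.sqrt (ξ i) + h i * Real.sqrt c₀) ^ 2)
    (j : Fin n) (hj : ∀ i, ρ i ≤ ρ j)
    (κopt zopt : Fin n → ℝ)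
    (hκopt : κopt = fun i =>
      if i = j then h j * C / (σ * Real.sqrt (ξ j * c₀) + h j * c₀) else 0)
    (hzopt : zopt = fun i =>
      if i = j then σ * C / (σ * ξ j + h j * Real.sqrt (ξ j * c₀)) else 0) :
    ((∀ i, 0 ≤ κopt i) ∧ (∀ i, 0 ≤ zopt i) ∧
      c₀ * ∑ i, κopt i + ∑ i, ξ i * zopt i ≤ C) ∧
    deflection n σ γ h κopt zopt = C * ρ j ∧
    (∀ κ z : Fin n → ℝ, (∀ i, 0 ≤ κ i) → (∀ i, 0 ≤ z i) →
      c₀ * ∑ i, κ i + ∑ i, ξ i * z i ≤ C →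
      deflection n σ γ h κ z ≤ C * ρ j) :=
  stmt_3_general n c₀ C σ ξ γ h hc₀ hC hσ hξ hh ρ hρ j hj κopt zopt hκopt hzopt
end

section
/- Fix n ≥ 1 and positive reals c₀, C̄, κ_max, P_max, and for each i ∈ {1,…,n} positive reals ξᵢ, γᵢ, hᵢ, and σ̃ > 0. Let D' = {(κ, z) ∈ ℝⁿ × ℝⁿ : 0 ≤ κᵢ ≤ κ_max, zᵢ ≥ 0, ξᵢ zᵢ ≤ P_max for all i, and c₀·∑ᵢ κᵢ + ∑ᵢ ξᵢ zᵢ ≤ C̄}, and let G(κ, z) = ∑_{i=1}^n κᵢ zᵢ γᵢ² hᵢ² / (zᵢ hᵢ² + κᵢ σ̃²), with the convention that a term equals 0 when κᵢ = zᵢ = 0. If (κ, z) ∈ D' maximizes G over D', then for every i one has κᵢ = 0 if and only if zᵢ = 0. -/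
open Finset

lemma sum_update_aux {n : ℕ} (f : Fin n → ℝ) (i : Fin n) (a : ℝ) :
    ∑ j, Function.update f i a j = ∑ j, f j - f i + a := by
  rw [Finset.sum_update_of_mem (Finset.mem_univ i), ← Finset.erase_eq,
    Finset.sum_erase_eq_sub (Finset.mem_univ i)]
  ring

lemma sum_update_mul_aux {n : ℕ} (ξ f : Fin n → ℝ) (i : Fin n) (a : ℝ) :
    ∑ j, ξ j * Function.update f i a j = ∑ j, ξ j * f j - ξ i * f i + ξ i * a := by
  have he : (fun j => ξ j * Function.update f i a j)
      = Function.update (fun j => ξ j * f j) i (ξ i * a) := by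
    funext j
    by_cases hj : j = i
    · subst hj; simp
    · simp [Function.update_of_ne hj]
  rw [he, sum_update_aux]

lemma deflection_lt_update {n : ℕ} (σ : ℝ) (γ h κ z : Fin n → ℝ) (i : Fin n)
    (hσ : 0 < σ) (hγ : 0 < γ i) (hh : 0 < h i) {a b : ℝ} (ha : 0 < a) (hb : 0 < b)
    (hti : (if κ i = 0 ∧ z i = 0 then (0:ℝ)
      else κ i * z i * (γ i) ^ 2 * (h i) ^ 2 / (z i * (h i) ^ 2 + κ i * σ ^ 2)) = 0) :
    deflection n σ γ h κ z
      < deflection n σ γ h (Function.update κ i a) (Function.update z i b) := by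
  unfold deflection
  apply Finset.sum_lt_sum
  · intro j _
    by_cases hj : j = i
    · subst hj
      rw [hti, Function.update_self, Function.update_self]
      have hcond : ¬ (a = 0 ∧ b = 0) := by
        intro hab; exact ha.ne' hab.1
      rw [if_neg hcond]
      positivity
    · simp [Function.update_of_ne hj]
  · refine ⟨i, Finset.mem_univ i, ?_⟩
    rw [hti, Function.update_self, Function.update_self]
    have hcond : ¬ (a = 0 ∧ b = 0) := by
      intro hab; exact ha.ne' hab.1
    rw [if_neg hcond]
    positivity

/-- Lemma 2, Scenario B: at a maximizer of the deflection over
the feasible set with system-level cost constraint and individual constraints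
`κᵢ ≤ κ_max`, `ξᵢ zᵢ ≤ P_max`, for each secondary user, `κᵢ = 0` iff `zᵢ = 0`. -/
theorem stmt_4 (n : ℕ) (hn : 1 ≤ n) (c₀ C κmax Pmax σ : ℝ) (ξ γ h : Fin n → ℝ)
    (hc₀ : 0 < c₀) (hC : 0 < C) (hκmax : 0 < κmax) (hPmax : 0 < Pmax) (hσ : 0 < σ)
    (hξ : ∀ i, 0 < ξ i) (hγ : ∀ i, 0 < γ i) (hh : ∀ i, 0 < h i)
    (κ z : Fin n → ℝ)
    (hκ : ∀ i, 0 ≤ κ i) (hκub : ∀ i, κ i ≤ κmax)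
    (hz : ∀ i, 0 ≤ z i) (hzub : ∀ i, ξ i * z i ≤ Pmax)
    (hcost : c₀ * ∑ i, κ i + ∑ i, ξ i * z i ≤ C)
    (hmax : ∀ κ' z' : Fin n → ℝ,
      (∀ i, 0 ≤ κ' i) → (∀ i, κ' i ≤ κmax) →
      (∀ i, 0 ≤ z' i) → (∀ i, ξ i * z' i ≤ Pmax) →
      c₀ * ∑ i, κ' i + ∑ i, ξ i * z' i ≤ C →
      deflection n σ γ h κ' z' ≤ deflection n σ γ h κ z) :
    ∀ i, κ i = 0 ↔ z i = 0 := by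
  intro i
  constructor
  · -- κ i = 0 → z i = 0
    intro hκ0
    by_contra hz0
    have hzpos : 0 < z i := lt_of_le_of_ne (hz i) (Ne.symm hz0)
    set a : ℝ := min κmax (ξ i * z i / (2 * c₀)) with ha_def
    set b : ℝ := z i / 2 with hb_def
    have ha : 0 < a := lt_min hκmax (div_pos (mul_pos (hξ i) hzpos) (by positivity))
    have hb : 0 < b := by positivity
    have hti : (if κ i = 0 ∧ z i = 0 then (0:ℝ)
        else κ i * z i * (γ i) ^ 2 * (h i) ^ 2 / (z i * (h i) ^ 2 + κ i * σ ^ 2)) = 0 := by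
      simp [hκ0, hz0]
    have hlt := deflection_lt_update σ γ h κ z i hσ (hγ i) (hh i) ha hb hti
    have ha2 : c₀ * a ≤ ξ i * z i / 2 := by
      have := min_le_right κmax (ξ i * z i / (2 * c₀))
      calc c₀ * a ≤ c₀ * (ξ i * z i / (2 * c₀)) := by
            exact mul_le_mul_of_nonneg_left this hc₀.le
        _ = ξ i * z i / 2 := by
            have hne : c₀ ≠ 0 := hc₀.ne'
            field_simp
    have hle := hmax (Function.update κ i a) (Function.update z i b)
      (fun j => by
        by_cases hj : j = i
        · rw [hj, Function.update_self]; exact ha.le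
        · simpa [Function.update_of_ne hj] using hκ j)
      (fun j => by
        by_cases hj : j = i
        · rw [hj, Function.update_self]; exact min_le_left _ _
        · simpa [Function.update_of_ne hj] using hκub j)
      (fun j => by
        by_cases hj : j = i
        · rw [hj, Function.update_self]; exact hb.le
        · simpa [Function.update_of_ne hj] using hz j)
      (fun j => by
        by_cases hj : j = i
        · rw [hj, Function.update_self]
          have : ξ i * b ≤ ξ i * z i := by
            apply mul_le_mul_of_nonneg_left _ (hξ i).le
            rw [hb_def]; linarith
          exact this.trans (hzub i)
        · simpa [Function.update_of_ne hj] using hzub j)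
      (by
        rw [sum_update_aux, sum_update_mul_aux]
        have hbb : ξ i * b = ξ i * z i / 2 := by rw [hb_def]; ring
        nlinarith [hcost, ha2, hκ0])
    linarith
  · -- z i = 0 → κ i = 0
    intro hz0
    by_contra hκ0
    have hκpos : 0 < κ i := lt_of_le_of_ne (hκ i) (Ne.symm hκ0)
    set a : ℝ := κ i / 2 with ha_def
    set b : ℝ := min (Pmax / ξ i) (c₀ * κ i / (2 * ξ i)) with hb_def
    have ha : 0 < a := by positivity
    have hb : 0 < b := lt_min (div_pos hPmax (hξ i)) (div_pos (mul_pos hc₀ hκpos) (mul_pos two_pos (hξ i)))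
    have hti : (if κ i = 0 ∧ z i = 0 then (0:ℝ)
        else κ i * z i * (γ i) ^ 2 * (h i) ^ 2 / (z i * (h i) ^ 2 + κ i * σ ^ 2)) = 0 := by
      simp [hz0]
    have hlt := deflection_lt_update σ γ h κ z i hσ (hγ i) (hh i) ha hb hti
    have hb2 : ξ i * b ≤ c₀ * κ i / 2 := by
      have hm := min_le_right (Pmax / ξ i) (c₀ * κ i / (2 * ξ i))
      calc ξ i * b ≤ ξ i * (c₀ * κ i / (2 * ξ i)) :=
            mul_le_mul_of_nonneg_left hm (hξ i).le
        _ = c₀ * κ i / 2 := by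
            have hne : ξ i ≠ 0 := (hξ i).ne'
            field_simp
    have hbP : ξ i * b ≤ Pmax := by
      have hm := min_le_left (Pmax / ξ i) (c₀ * κ i / (2 * ξ i))
      calc ξ i * b ≤ ξ i * (Pmax / ξ i) := mul_le_mul_of_nonneg_left hm (hξ i).le
        _ = Pmax := mul_div_cancel₀ Pmax (hξ i).ne'
    have hle := hmax (Function.update κ i a) (Function.update z i b)
      (fun j => by
        by_cases hj : j = i
        · rw [hj, Function.update_self]; exact ha.le
        · simpa [Function.update_of_ne hj] using hκ j)
      (fun j => by
        by_cases hj : j = i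
        · rw [hj, Function.update_self]
          calc a ≤ κ i := by rw [ha_def]; linarith
            _ ≤ κmax := hκub i
        · simpa [Function.update_of_ne hj] using hκub j)
      (fun j => by
        by_cases hj : j = i
        · rw [hj, Function.update_self]; exact hb.le
        · simpa [Function.update_of_ne hj] using hz j)
      (fun j => by
        by_cases hj : j = i
        · rw [hj, Function.update_self]; exact hbP
        · simpa [Function.update_of_ne hj] using hzub j)
      (by
        rw [sum_update_aux, sum_update_mul_aux]
        have haa : c₀ * a = c₀ * κ i / 2 := by rw [ha_def]; ring
        nlinarith [hcost, hb2, hz0])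
    linarith
end

section
/- Fix n ≥ 1, positive reals aᵢ, bᵢ, ξᵢ for i ∈ {1,…,n}, and P > 0. Suppose λ > 0 and z ∈ ℝⁿ satisfy zᵢ = max(0, √(aᵢ bᵢ/(ξᵢ λ)) − bᵢ) for every i, and ∑ᵢ ξᵢ zᵢ = P. Then z minimizes the objective ∑_{i=1}^n aᵢ bᵢ/(wᵢ + bᵢ) over the feasible set {w ∈ ℝⁿ : wᵢ ≥ 0 for all i and ∑ᵢ ξᵢ wᵢ ≤ P}; that is, for every such w, ∑ᵢ aᵢ bᵢ/(zᵢ + bᵢ) ≤ ∑ᵢ aᵢ bᵢ/(wᵢ + bᵢ). -/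
open Finset

/-!
Weak Lagrangian duality. With `c = ξλ`, each `zᵢ` minimizes the one-variable Lagrangian
`w ↦ ab/(w + b) + c w` over `w ≥ 0`: by AM-GM, `ab/x + c x ≥ 2√(abc)` with equality at
`x = √(ab/c)`, and when that point lies below `b` the Lagrangian is increasing on `w ≥ 0`.
Summing over `i` and using `∑ ξᵢ wᵢ ≤ P = ∑ ξᵢ zᵢ` removes the penalty term.
-/

theorem sum_le_sum_of_add_mul_le {ι : Type*} (s : Finset ι) {u v x y : ι → ℝ} {lam : ℝ}
    (hlam : 0 ≤ lam) (h : ∀ i ∈ s, u i + lam * x i ≤ v i + lam * y i)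
    (hxy : ∑ i ∈ s, y i ≤ ∑ i ∈ s, x i) :
    ∑ i ∈ s, u i ≤ ∑ i ∈ s, v i := by
  have hsum := sum_le_sum h
  simp only [sum_add_distrib, ← mul_sum] at hsum
  linarith [mul_le_mul_of_nonneg_left hxy hlam]

theorem two_mul_mul_le_div_add_mul {c s x : ℝ} (hc : 0 ≤ c) (hx : 0 < x) :
    2 * c * s ≤ c * s ^ 2 / x + c * x := by
  have : c * s ^ 2 / x + c * x - 2 * c * s = c * (s - x) ^ 2 / x := by
    field_simp; ring
  nlinarith [show 0 ≤ c * (s - x) ^ 2 / x by positivity]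

theorem le_mul_div_add_mul {a b c w : ℝ} (hb : 0 < b) (hc : 0 ≤ c) (hw : 0 ≤ w)
    (habc : a ≤ c * b) : a ≤ a * b / (w + b) + c * w := by
  have hwb : 0 < w + b := by linarith
  rw [← sub_nonneg, show a * b / (w + b) + c * w - a = (c * (w + b) - a) * w / (w + b) by
    field_simp; ring]
  have : 0 ≤ c * (w + b) - a := by nlinarith
  positivity

noncomputable def waterFill (a b c : ℝ) : ℝ := max 0 (√(a * b / c) - b)

theorem isMinOn_waterFill {a b c : ℝ} (ha : 0 < a) (hb : 0 < b) (hc : 0 < c) :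
    IsMinOn (fun w => a * b / (w + b) + c * w) (Set.Ici 0) (waterFill a b c) := by
  intro w (hw : 0 ≤ w)
  simp only [Set.mem_ofPred_eq, waterFill]
  set s := √(a * b / c)
  have hs : 0 < s := by positivity
  have hcs : c * s ^ 2 = a * b := by
    rw [Real.sq_sqrt (by positivity)]; field_simp
  rcases le_or_gt s b with hsb | hbs
  · rw [max_eq_left (by linarith), zero_add, mul_zero, add_zero,
      mul_div_cancel_right₀ _ hb.ne']
    refine le_mul_div_add_mul hb hc.le hw (le_of_mul_le_mul_right ?_ hb)
    nlinarith [mul_le_mul_of_nonneg_left (pow_le_pow_left₀ hs.le hsb 2) hc.le]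
  · rw [max_eq_right (by linarith), sub_add_cancel, ← hcs]
    have := two_mul_mul_le_div_add_mul (s := s) hc.le (by linarith : 0 < w + b)
    have : c * s ^ 2 / s = c * s := by field_simp
    linarith

theorem stmt_5_general (n : ℕ) (a b ξ : Fin n → ℝ) (P : ℝ)
    (ha : ∀ i, 0 < a i) (hb : ∀ i, 0 < b i) (hξ : ∀ i, 0 < ξ i)
    (lam : ℝ) (hlam : 0 < lam) (z : Fin n → ℝ)
    (hz : ∀ i, z i = max 0 (Real.sqrt (a i * b i / (ξ i * lam)) - b i))
    (hsum : ∑ i, ξ i * z i = P) :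
    ∀ w : Fin n → ℝ, (∀ i, 0 ≤ w i) → ∑ i, ξ i * w i ≤ P →
      ∑ i, a i * b i / (z i + b i) ≤ ∑ i, a i * b i / (w i + b i) := by
  intro w hw hwP
  refine sum_le_sum_of_add_mul_le _ hlam.le (fun i _ => ?_) (hwP.trans hsum.ge)
  have hmin := isMinOn_waterFill (ha i) (hb i) (mul_pos (hξ i) hlam) (Set.mem_Ici.2 (hw i))
  simp only [Set.mem_ofPred_eq, waterFill, ← hz i] at hmin
  linarith

/-- water-filling, Scenario A: if `λ > 0` and
`zᵢ = max(0, √(aᵢbᵢ/(ξᵢλ)) − bᵢ)` for all `i` with `∑ᵢ ξᵢ zᵢ = P`, then `z`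
minimizes `∑ᵢ aᵢbᵢ/(wᵢ + bᵢ)` over `{w : wᵢ ≥ 0, ∑ᵢ ξᵢ wᵢ ≤ P}`. -/
theorem stmt_5 (n : ℕ) (hn : 1 ≤ n) (a b ξ : Fin n → ℝ) (P : ℝ) (hP : 0 < P)
    (ha : ∀ i, 0 < a i) (hb : ∀ i, 0 < b i) (hξ : ∀ i, 0 < ξ i)
    (lam : ℝ) (hlam : 0 < lam) (z : Fin n → ℝ)
    (hz : ∀ i, z i = max 0 (Real.sqrt (a i * b i / (ξ i * lam)) - b i))
    (hsum : ∑ i, ξ i * z i = P) :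
    ∀ w : Fin n → ℝ, (∀ i, 0 ≤ w i) → ∑ i, ξ i * w i ≤ P →
      ∑ i, a i * b i / (z i + b i) ≤ ∑ i, a i * b i / (w i + b i) :=
  stmt_5_general n a b ξ P ha hb hξ lam hlam z hz hsum
end

section
/- Fix n ≥ 1, positive reals aⱼ, bⱼ, ξⱼ for j ∈ {1,…,n}, and P > 0. Define βⱼ = √(bⱼ ξⱼ / aⱼ) and assume β₁ ≤ β₂ ≤ ⋯ ≤ βₙ. For 1 ≤ i ≤ n define f(i) = βᵢ · (∑_{j=1}^i √(aⱼ bⱼ ξⱼ)) / (P + ∑_{j=1}^i bⱼ ξⱼ). Then: (a) f(1) < 1; (b) for every 1 ≤ i < n, if f(i) < 1 then f(i+1) ≥ f(i); and (c) for every 1 ≤ i < n, if f(i) ≥ 1 then f(i+1) ≥ 1. -/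
open Finset

/-!
Write `cⱼ = √(aⱼbⱼξⱼ)`, so that `βⱼcⱼ = bⱼξⱼ` and
`f(i) = βᵢ (∑_{j≤i} cⱼ) / (P + ∑_{j≤i} βⱼcⱼ)`. Passing from `i` to `i + 1` raises `βᵢ` to
`βᵢ₊₁` and then forms the mediant of `βᵢ₊₁ (∑_{j≤i} cⱼ) / (P + ∑_{j≤i} βⱼcⱼ)` with
`βᵢ₊₁cᵢ₊₁ / βᵢ₊₁cᵢ₊₁ = 1`. A mediant is at least the smaller of the two fractions, hence
`f(i + 1) ≥ min (f(i), 1)`, which gives (b) and (c) at once.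
-/

theorem sqrt_div_mul_sqrt_mul {a x : ℝ} (ha : 0 < a) (hx : 0 ≤ x) :
    √(x / a) * √(a * x) = x := by
  rw [← Real.sqrt_mul (div_nonneg hx ha.le)]
  have : x / a * (a * x) = x * x := by field_simp
  rw [this, Real.sqrt_mul_self hx]

theorem min_div_le_add_div_add {x y p q : ℝ} (hp : 0 < p) (hq : 0 < q) :
    min (x / p) (y / q) ≤ (x + y) / (p + q) := by
  rw [le_div_iff₀ (add_pos hp hq), mul_add]
  exact add_le_add ((le_div_iff₀ hp).1 (min_le_left _ _))
    ((le_div_iff₀ hq).1 (min_le_right _ _))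

theorem min_div_one_le_mediant {β β' S c D : ℝ} (hβ : β ≤ β') (hS : 0 ≤ S) (hD : 0 < D)
    (hc : 0 < β' * c) :
    min (β * S / D) 1 ≤ β' * (S + c) / (D + β' * c) :=
  calc min (β * S / D) 1 ≤ min (β' * S / D) (β' * c / (β' * c)) := by
        rw [div_self hc.ne']; gcongr
    _ ≤ β' * (S + c) / (D + β' * c) := by
        rw [mul_add]; exact min_div_le_add_div_add hD hc

theorem Fin.Iic_mk_add_one {n i : ℕ} (hi : i + 1 < n) :
    Iic (⟨i + 1, hi⟩ : Fin n) = insert ⟨i + 1, hi⟩ (Iic ⟨i, i.lt_of_succ_lt hi⟩) := by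
  ext j
  simp only [mem_Iic, mem_insert, Fin.le_def, Fin.ext_iff]
  omega

theorem Fin.Iic_mk_zero {n : ℕ} (hn : 0 < n) : Iic (⟨0, hn⟩ : Fin n) = {⟨0, hn⟩} := by
  ext j
  simp [Fin.le_def, Fin.ext_iff]

/-- Appendix D: with `βⱼ = √(bⱼξⱼ/aⱼ)` sorted increasingly and
`f(i) = βᵢ·(∑_{j≤i} √(aⱼbⱼξⱼ))/(P + ∑_{j≤i} bⱼξⱼ)`, one has (a) `f(1) < 1`;
(b) `f` is nondecreasing while below `1`; (c) the property `f(i) ≥ 1` is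
absorbing. -/
theorem stmt_6 (n : ℕ) (hn : 1 ≤ n) (a b ξ : Fin n → ℝ) (P : ℝ) (hP : 0 < P)
    (ha : ∀ i, 0 < a i) (hb : ∀ i, 0 < b i) (hξ : ∀ i, 0 < ξ i)
    (β : Fin n → ℝ) (hβ : ∀ i, β i = Real.sqrt (b i * ξ i / a i))
    (hsort : Monotone β)
    (f : Fin n → ℝ)
    (hf : ∀ i, f i = β i * (∑ j ∈ Finset.Iic i, Real.sqrt (a j * b j * ξ j)) /
      (P + ∑ j ∈ Finset.Iic i, b j * ξ j)) :
    f ⟨0, hn⟩ < 1 ∧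
    (∀ i : ℕ, ∀ hi : i + 1 < n,
      f ⟨i, by omega⟩ < 1 → f ⟨i, by omega⟩ ≤ f ⟨i + 1, hi⟩) ∧
    (∀ i : ℕ, ∀ hi : i + 1 < n,
      1 ≤ f ⟨i, by omega⟩ → 1 ≤ f ⟨i + 1, hi⟩) := by
  set c : Fin n → ℝ := fun j ↦ √(a j * b j * ξ j)
  have hβc (j : Fin n) : β j * c j = b j * ξ j := by
    rw [hβ, show c j = √(a j * (b j * ξ j)) by simp only [c, mul_assoc]]
    exact sqrt_div_mul_sqrt_mul (ha j) (mul_pos (hb j) (hξ j)).le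
  have hβc_pos (j : Fin n) : 0 < β j * c j := hβc j ▸ mul_pos (hb j) (hξ j)
  have hF (i : Fin n) :
      f i = β i * (∑ j ∈ Iic i, c j) / (P + ∑ j ∈ Iic i, β j * c j) := by
    simp only [hf, hβc, c]
  have hstep (i : ℕ) (hi : i + 1 < n) : min (f ⟨i, by omega⟩) 1 ≤ f ⟨i + 1, hi⟩ := by
    have hnotin : (⟨i + 1, hi⟩ : Fin n) ∉ Iic ⟨i, by omega⟩ := by simp [Fin.le_def]
    rw [hF, hF, Fin.Iic_mk_add_one hi, sum_insert hnotin, sum_insert hnotin, add_comm (c _),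
      add_comm (β _ * c _), ← add_assoc]
    exact min_div_one_le_mediant (hsort (Fin.mk_le_mk.2 i.le_succ))
      (sum_nonneg fun j _ ↦ Real.sqrt_nonneg _)
      (add_pos_of_pos_of_nonneg hP (sum_nonneg fun j _ ↦ (hβc_pos j).le)) (hβc_pos _)
  refine ⟨?_, fun i hi h ↦ min_eq_left h.le ▸ hstep i hi,
    fun i hi h ↦ min_eq_right h ▸ hstep i hi⟩
  rw [hF, Fin.Iic_mk_zero, sum_singleton, sum_singleton,
    div_lt_one (by linarith [hβc_pos ⟨0, hn⟩])]
  linarith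
end

section
/- Let n ≥ 1, let θ₁,…,θₙ be positive reals, let P > 0 and σ̃ > 0, and let Q(x) = ∫_x^∞ (2π)^{-1/2} e^{-t²/2} dt denote the standard Gaussian tail function. Then Q( (1/(2σ̃))·√(P · maxᵢ θᵢ) ) ≤ Q( (1/(2σ̃))·√(P · (∑ᵢ θᵢ²)/(∑ᵢ θᵢ)) ) ≤ Q( (1/(2σ̃))·√(P · (∑ᵢ θᵢ)/n) ). -/
open Finset

/-- The standard Gaussian tail function `Q(x) = ∫_x^∞ (2π)^{-1/2} e^{-t²/2} dt`. -/
noncomputable def gaussQ (x : ℝ) : ℝ :=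
  ∫ t in Set.Ioi x, (2 * Real.pi) ^ (-(1 : ℝ) / 2) * Real.exp (-t ^ 2 / 2)

lemma gaussQ_integrable :
    MeasureTheory.Integrable
      (fun t : ℝ => (2 * Real.pi) ^ (-(1 : ℝ) / 2) * Real.exp (-t ^ 2 / 2)) := by
  have h := (integrable_exp_neg_mul_sq (by norm_num : (0:ℝ) < 1/2)).const_mul
    ((2 * Real.pi) ^ (-(1 : ℝ) / 2))
  refine h.congr ?_
  filter_upwards with t
  ring_nf

lemma gaussQ_anti {x y : ℝ} (h : x ≤ y) : gaussQ y ≤ gaussQ x := by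
  unfold gaussQ
  apply MeasureTheory.setIntegral_mono_set gaussQ_integrable.integrableOn
  · filter_upwards with t
    positivity
  · exact HasSubset.Subset.eventuallyLE (Set.Ioi_subset_Ioi h)

/-- Lemma 3: for positive `θᵢ`, `P > 0`, `σ̃ > 0`,
`Q((1/(2σ̃))√(P·maxᵢθᵢ)) ≤ Q((1/(2σ̃))√(P·(∑θᵢ²)/(∑θᵢ))) ≤ Q((1/(2σ̃))√(P·(∑θᵢ)/n))`. -/
theorem stmt_7 (n : ℕ) (hn : 1 ≤ n) (θ : Fin n → ℝ) (hθ : ∀ i, 0 < θ i)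
    (P σ : ℝ) (hP : 0 < P) (hσ : 0 < σ) :
    gaussQ ((1 / (2 * σ)) *
        Real.sqrt (P * Finset.univ.sup' ⟨⟨0, hn⟩, Finset.mem_univ _⟩ θ)) ≤
      gaussQ ((1 / (2 * σ)) *
        Real.sqrt (P * ((∑ i, (θ i) ^ 2) / (∑ i, θ i)))) ∧
    gaussQ ((1 / (2 * σ)) *
        Real.sqrt (P * ((∑ i, (θ i) ^ 2) / (∑ i, θ i)))) ≤
      gaussQ ((1 / (2 * σ)) * Real.sqrt (P * ((∑ i, θ i) / n))) := by
  have hne : (Finset.univ : Finset (Fin n)).Nonempty := ⟨⟨0, hn⟩, Finset.mem_univ _⟩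
  set M := Finset.univ.sup' ⟨⟨0, hn⟩, Finset.mem_univ _⟩ θ with hM
  have hA : 0 < ∑ i, θ i := Finset.sum_pos (fun i _ => hθ i) hne
  have hnpos : (0:ℝ) < n := by exact_mod_cast hn
  have hc : 0 ≤ 1 / (2 * σ) := by positivity
  have key1 : (∑ i, (θ i) ^ 2) / (∑ i, θ i) ≤ M := by
    rw [div_le_iff₀ hA]
    calc ∑ i, (θ i) ^ 2 ≤ ∑ i, M * θ i := by
          apply Finset.sum_le_sum
          intro i _
          have : θ i ≤ M := Finset.le_sup' θ (Finset.mem_univ i)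
          nlinarith [(hθ i).le]
      _ = M * ∑ i, θ i := by rw [Finset.mul_sum]
  have key2 : (∑ i, θ i) / n ≤ (∑ i, (θ i) ^ 2) / (∑ i, θ i) := by
    rw [div_le_div_iff₀ hnpos hA]
    have := sq_sum_le_card_mul_sum_sq (s := (Finset.univ : Finset (Fin n))) (f := θ)
    simp only [Finset.card_univ, Fintype.card_fin] at this
    calc (∑ i, θ i) * (∑ i, θ i) = (∑ i, θ i) ^ 2 := by ring
      _ ≤ n * ∑ i, (θ i) ^ 2 := by exact_mod_cast this
      _ = (∑ i, (θ i) ^ 2) * n := by ring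
  constructor
  · apply gaussQ_anti
    apply mul_le_mul_of_nonneg_left _ hc
    exact Real.sqrt_le_sqrt (by nlinarith)
  · apply gaussQ_anti
    apply mul_le_mul_of_nonneg_left _ hc
    exact Real.sqrt_le_sqrt (by nlinarith)
end

section
/- Fix n ≥ 1, positive reals c₀ and ε, and for each i ∈ {1,…,n} positive reals ξᵢ, γᵢ, hᵢ, and σ̃ > 0. Let G(κ, z) = ∑_{i=1}^n κᵢ zᵢ γᵢ² hᵢ² / (zᵢ hᵢ² + κᵢ σ̃²) (with the convention that a term equals 0 when κᵢ = zᵢ = 0) and consider the feasible set E = {(κ, z) ∈ ℝⁿ × ℝⁿ : κᵢ ≥ 0, zᵢ ≥ 0 for all i and G(κ, z) ≥ ε}. Then the infimum of the cost c₀·∑ᵢ κᵢ + ∑ᵢ ξᵢ zᵢ over E equals ε · minᵢ (σ̃·√ξᵢ + hᵢ·√c₀)²/(γᵢ² hᵢ²), and it is attained at the single-user allocation in which, for an index j achieving the minimum, κⱼ = (ε/γⱼ²)·(1 + (σ̃/hⱼ)·√(ξⱼ/c₀)), zⱼ = (ε σ̃²/(γⱼ² hⱼ²))·(1 + (hⱼ/σ̃)·√(c₀/ξⱼ)),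 and κᵢ = zᵢ = 0 for all i ≠ j. -/
/-!
Every user obeys the same per-user bound: by the two-term Cauchy–Schwarz (Sedrakyan) inequality,
`(σ̃√ξᵢ + hᵢ√c₀)² · κᵢzᵢ / (zᵢhᵢ² + κᵢσ̃²) ≤ c₀κᵢ + ξᵢzᵢ`, i.e. each unit of deflection bought from
user `i` costs at least `rᵢ = (σ̃√ξᵢ + hᵢ√c₀)²/(γᵢ²hᵢ²)`. Summing, any feasible allocation costs at
least `ε · minᵢ rᵢ`. Spending everything on a minimizing user `j`, with `κⱼσ̃√c₀ = zⱼhⱼ√ξⱼ` (the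
equality case) and deflection exactly `ε`, attains the bound.
-/

open Finset

noncomputable section

def deflectionTerm (σ γ h a b : ℝ) : ℝ :=
  if a = 0 ∧ b = 0 then 0 else a * b * γ ^ 2 * h ^ 2 / (b * h ^ 2 + a * σ ^ 2)

theorem deflection_eq_sum (n : ℕ) (σ : ℝ) (γ h κ z : Fin n → ℝ) :
    deflection n σ γ h κ z = ∑ i, deflectionTerm σ (γ i) (h i) (κ i) (z i) :=
  rfl

def costRatio (c ξ σ γ h : ℝ) : ℝ :=
  (σ * Real.sqrt ξ + h * Real.sqrt c) ^ 2 / (γ ^ 2 * h ^ 2)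

def optimalSamples (c ξ σ γ h ε : ℝ) : ℝ :=
  (ε / γ ^ 2) * (1 + (σ / h) * Real.sqrt (ξ / c))

def optimalGain (c ξ σ γ h ε : ℝ) : ℝ :=
  (ε * σ ^ 2 / (γ ^ 2 * h ^ 2)) * (1 + (h / σ) * Real.sqrt (c / ξ))

end

theorem sq_add_mul_mul_le (p q s t a b : ℝ) :
    (s * q + t * p) ^ 2 * (a * b) ≤ (p ^ 2 * a + q ^ 2 * b) * (b * t ^ 2 + a * s ^ 2) :=
  calc (s * q + t * p) ^ 2 * (a * b)
      = (p ^ 2 * a + q ^ 2 * b) * (b * t ^ 2 + a * s ^ 2) - (a * s * p - b * t * q) ^ 2 := by ring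
    _ ≤ _ := sub_le_self _ (sq_nonneg _)

section deflectionTerm

variable {σ γ h a b : ℝ}

theorem deflectionTerm_nonneg (ha : 0 ≤ a) (hb : 0 ≤ b) : 0 ≤ deflectionTerm σ γ h a b := by
  unfold deflectionTerm
  split_ifs <;> positivity

theorem costRatio_mul_deflectionTerm_le {c ξ : ℝ} (hc : 0 ≤ c) (hξ : 0 ≤ ξ) (hσ : σ ≠ 0)
    (hγ : γ ≠ 0) (hh : h ≠ 0) (ha : 0 ≤ a) (hb : 0 ≤ b) :
    costRatio c ξ σ γ h * deflectionTerm σ γ h a b ≤ c * a + ξ * b := by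
  unfold deflectionTerm
  split_ifs with hab
  · rw [mul_zero]
    positivity
  have hD : 0 < b * h ^ 2 + a * σ ^ 2 := by
    rcases not_and_or.mp hab with ha0 | hb0
    · have := lt_of_le_of_ne ha (Ne.symm ha0); positivity
    · have := lt_of_le_of_ne hb (Ne.symm hb0); positivity
  have key := sq_add_mul_mul_le (Real.sqrt c) (Real.sqrt ξ) σ h a b
  rw [Real.sq_sqrt hc, Real.sq_sqrt hξ] at key
  calc costRatio c ξ σ γ h * (a * b * γ ^ 2 * h ^ 2 / (b * h ^ 2 + a * σ ^ 2))
      = (σ * Real.sqrt ξ + h * Real.sqrt c) ^ 2 * (a * b) / (b * h ^ 2 + a * σ ^ 2) := by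
        unfold costRatio
        field_simp
    _ ≤ c * a + ξ * b := (div_le_iff₀ hD).mpr key

end deflectionTerm

theorem mul_costRatio_le_cost {n : ℕ} {c ε σ : ℝ} {ξ γ h κ z : Fin n → ℝ} (hc : 0 ≤ c)
    (hσ : σ ≠ 0) (hξ : ∀ i, 0 ≤ ξ i) (hγ : ∀ i, γ i ≠ 0) (hh : ∀ i, h i ≠ 0)
    (hκ : ∀ i, 0 ≤ κ i) (hz : ∀ i, 0 ≤ z i) (hG : ε ≤ deflection n σ γ h κ z) (j : Fin n)
    (hj : ∀ i, costRatio c (ξ j) σ (γ j) (h j) ≤ costRatio c (ξ i) σ (γ i) (h i)) :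
    ε * costRatio c (ξ j) σ (γ j) (h j) ≤ c * ∑ i, κ i + ∑ i, ξ i * z i := by
  have hr : 0 ≤ costRatio c (ξ j) σ (γ j) (h j) := by unfold costRatio; positivity
  calc ε * costRatio c (ξ j) σ (γ j) (h j)
      ≤ costRatio c (ξ j) σ (γ j) (h j) * deflection n σ γ h κ z := by
        rw [mul_comm]; exact mul_le_mul_of_nonneg_left hG hr
    _ = ∑ i, costRatio c (ξ j) σ (γ j) (h j) * deflectionTerm σ (γ i) (h i) (κ i) (z i) := by
        rw [deflection_eq_sum, mul_sum]
    _ ≤ ∑ i, costRatio c (ξ i) σ (γ i) (h i) * deflectionTerm σ (γ i) (h i) (κ i) (z i) :=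
        sum_le_sum fun i _ => mul_le_mul_of_nonneg_right (hj i) (deflectionTerm_nonneg (hκ i) (hz i))
    _ ≤ ∑ i, (c * κ i + ξ i * z i) :=
        sum_le_sum fun i _ => costRatio_mul_deflectionTerm_le hc (hξ i) hσ (hγ i) (hh i) (hκ i) (hz i)
    _ = c * ∑ i, κ i + ∑ i, ξ i * z i := by rw [sum_add_distrib, mul_sum]

section optimal

variable {c ξ σ γ h ε : ℝ}

theorem optimalSamples_pos (hσ : 0 < σ) (hγ : 0 < γ) (hh : 0 < h) (hε : 0 < ε) :
    0 < optimalSamples c ξ σ γ h ε := by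
  unfold optimalSamples; positivity

theorem optimalGain_pos (hσ : 0 < σ) (hγ : 0 < γ) (hh : 0 < h) (hε : 0 < ε) :
    0 < optimalGain c ξ σ γ h ε := by
  unfold optimalGain; positivity

theorem deflectionTerm_optimal (hc : 0 < c) (hξ : 0 < ξ) (hσ : 0 < σ) (hγ : 0 < γ)
    (hh : 0 < h) (hε : 0 < ε) :
    deflectionTerm σ γ h (optimalSamples c ξ σ γ h ε) (optimalGain c ξ σ γ h ε) = ε := by
  rw [deflectionTerm, if_neg fun hab => (optimalSamples_pos hσ hγ hh hε).ne' hab.1]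
  unfold optimalSamples optimalGain
  rw [Real.sqrt_div hξ.le, Real.sqrt_div hc.le]
  have := Real.sqrt_pos.mpr hc
  have := Real.sqrt_pos.mpr hξ
  field_simp
  ring

theorem cost_optimal (hc : 0 < c) (hξ : 0 < ξ) (hσ : 0 < σ) (hγ : 0 < γ) (hh : 0 < h) :
    c * optimalSamples c ξ σ γ h ε + ξ * optimalGain c ξ σ γ h ε = ε * costRatio c ξ σ γ h := by
  unfold optimalSamples optimalGain costRatio
  rw [Real.sqrt_div hξ.le, Real.sqrt_div hc.le]
  have := Real.sqrt_pos.mpr hc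
  have := Real.sqrt_pos.mpr hξ
  nth_rewrite 1 [← Real.sq_sqrt hc.le]
  nth_rewrite 2 [← Real.sq_sqrt hξ.le]
  field_simp
  ring

end optimal

theorem stmt_8_general (n : ℕ) (c₀ ε σ : ℝ) (ξ γ h : Fin n → ℝ)
    (hc₀ : 0 < c₀) (hε : 0 < ε) (hσ : 0 < σ)
    (hξ : ∀ i, 0 < ξ i) (hγ : ∀ i, 0 < γ i) (hh : ∀ i, 0 < h i)
    (r : Fin n → ℝ)
    (hr : ∀ i, r i = (σ * Real.sqrt (ξ i) + h i * Real.sqrt c₀) ^ 2 /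
      ((γ i) ^ 2 * (h i) ^ 2))
    (j : Fin n) (hj : ∀ i, r j ≤ r i)
    (κopt zopt : Fin n → ℝ)
    (hκopt : κopt = fun i =>
      if i = j then (ε / (γ j) ^ 2) * (1 + (σ / h j) * Real.sqrt (ξ j / c₀))
      else 0)
    (hzopt : zopt = fun i =>
      if i = j then (ε * σ ^ 2 / ((γ j) ^ 2 * (h j) ^ 2)) *
        (1 + (h j / σ) * Real.sqrt (c₀ / ξ j))
      else 0) :
    ((∀ i, 0 ≤ κopt i) ∧ (∀ i, 0 ≤ zopt i) ∧
      ε ≤ deflection n σ γ h κopt zopt) ∧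
    c₀ * ∑ i, κopt i + ∑ i, ξ i * zopt i = ε * r j ∧
    (∀ κ z : Fin n → ℝ, (∀ i, 0 ≤ κ i) → (∀ i, 0 ≤ z i) →
      ε ≤ deflection n σ γ h κ z →
      ε * r j ≤ c₀ * ∑ i, κ i + ∑ i, ξ i * z i) := by
  obtain rfl : r = fun i => costRatio c₀ (ξ i) σ (γ i) (h i) := funext hr
  have hκ_pos := optimalSamples_pos (c := c₀) (ξ := ξ j) hσ (hγ j) (hh j) hε
  have hz_pos := optimalGain_pos (c := c₀) (ξ := ξ j) hσ (hγ j) (hh j) hε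
  change κopt = fun i => if i = j then optimalSamples c₀ (ξ j) σ (γ j) (h j) ε else 0 at hκopt
  change zopt = fun i => if i = j then optimalGain c₀ (ξ j) σ (γ j) (h j) ε else 0 at hzopt
  subst hκopt hzopt
  refine ⟨⟨fun i => ?_, fun i => ?_, ?_⟩, ?_, fun κ z hκ hz hG => ?_⟩
  · dsimp only; positivity
  · dsimp only; positivity
  · rw [deflection_eq_sum, sum_eq_single j (fun i _ hij => by simp [hij, deflectionTerm])
      (by simp)]
    simp only [↓reduceIte]
    exact (deflectionTerm_optimal hc₀ (hξ j) hσ (hγ j) (hh j) hε).ge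
  · simpa [mul_ite] using cost_optimal hc₀ (hξ j) hσ (hγ j) (hh j)
  · exact mul_costRatio_le_cost hc₀.le hσ.ne' (fun i => (hξ i).le) (fun i => (hγ i).ne')
      (fun i => (hh i).ne') hκ hz hG j hj

/-- Theorem 2: the minimum of the system-level cost
`c₀∑κᵢ + ∑ξᵢzᵢ` over the set where the deflection is at least `ε` equals
`ε · minᵢ (σ̃√ξᵢ + hᵢ√c₀)²/(γᵢ²hᵢ²)`, attained at a single-user allocation in
which only a user `j` achieving the minimum is active, with
`κⱼ = (ε/γⱼ²)(1 + (σ̃/hⱼ)√(ξⱼ/c₀))` and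
`zⱼ = (εσ̃²/(γⱼ²hⱼ²))(1 + (hⱼ/σ̃)√(c₀/ξⱼ))`. -/
theorem stmt_8 (n : ℕ) (hn : 1 ≤ n) (c₀ ε σ : ℝ) (ξ γ h : Fin n → ℝ)
    (hc₀ : 0 < c₀) (hε : 0 < ε) (hσ : 0 < σ)
    (hξ : ∀ i, 0 < ξ i) (hγ : ∀ i, 0 < γ i) (hh : ∀ i, 0 < h i)
    (r : Fin n → ℝ)
    (hr : ∀ i, r i = (σ * Real.sqrt (ξ i) + h i * Real.sqrt c₀) ^ 2 /
      ((γ i) ^ 2 * (h i) ^ 2))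
    (j : Fin n) (hj : ∀ i, r j ≤ r i)
    (κopt zopt : Fin n → ℝ)
    (hκopt : κopt = fun i =>
      if i = j then (ε / (γ j) ^ 2) * (1 + (σ / h j) * Real.sqrt (ξ j / c₀))
      else 0)
    (hzopt : zopt = fun i =>
      if i = j then (ε * σ ^ 2 / ((γ j) ^ 2 * (h j) ^ 2)) *
        (1 + (h j / σ) * Real.sqrt (c₀ / ξ j))
      else 0) :
    ((∀ i, 0 ≤ κopt i) ∧ (∀ i, 0 ≤ zopt i) ∧
      ε ≤ deflection n σ γ h κopt zopt) ∧
    c₀ * ∑ i, κopt i + ∑ i, ξ i * zopt i = ε * r j ∧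
    (∀ κ z : Fin n → ℝ, (∀ i, 0 ≤ κ i) → (∀ i, 0 ≤ z i) →
      ε ≤ deflection n σ γ h κ z →
      ε * r j ≤ c₀ * ∑ i, κ i + ∑ i, ξ i * z i) :=
  stmt_8_general n c₀ ε σ ξ γ h hc₀ hε hσ hξ hγ hh r hr j hj κopt zopt hκopt hzopt
end

section
/- Let c > 0 and let Q(x) = ∫_x^∞ (2π)^{-1/2} e^{-t²/2} dt. Define B(φ) = √(8πc) · sin φ · exp(2c sin²φ) · Q(2√c · sin φ) for φ ∈ (0, π/2]. Then 0 < B(φ) < 1 for every φ ∈ (0, π/2], and the sequence n ↦ (1/π)·∫_0^{π/2} B(φ)ⁿ dφ is strictly decreasing in n ∈ ℕ. -/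
open MeasureTheory Set Filter Topology Real

noncomputable def gaussDensity (t : ℝ) : ℝ := (2 * π) ^ (-(1 : ℝ) / 2) * exp (-t ^ 2 / 2)

noncomputable def millsRatio (x : ℝ) : ℝ := gaussQ x / gaussDensity x

theorem gaussDensity_pos (t : ℝ) : 0 < gaussDensity t := by
  unfold gaussDensity; positivity

theorem gaussQ_eq_integral_gaussDensity (x : ℝ) : gaussQ x = ∫ t in Ioi x, gaussDensity t := rfl

theorem inv_gaussDensity (x : ℝ) : (gaussDensity x)⁻¹ = √(2 * π) * exp (x ^ 2 / 2) := by
  rw [gaussDensity, mul_inv, ← rpow_neg (by positivity), ← exp_neg, sqrt_eq_rpow]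
  norm_num [neg_div]

theorem hasDerivAt_gaussDensity (x : ℝ) : HasDerivAt gaussDensity (-x * gaussDensity x) x := by
  have h : HasDerivAt (fun t : ℝ => -t ^ 2 / 2) (-x) x :=
    ((hasDerivAt_pow 2 x).fun_neg.div_const 2).congr_deriv (by ring)
  unfold gaussDensity
  exact (h.exp.const_mul ((2 * π) ^ (-(1 : ℝ) / 2))).congr_deriv (by ring)

theorem tendsto_gaussDensity_atTop : Tendsto gaussDensity atTop (𝓝 0) := by
  have h : Tendsto (fun t : ℝ => -t ^ 2 / 2) atTop atBot :=
    (tendsto_neg_atTop_atBot.comp (tendsto_pow_atTop two_ne_zero)).atBot_div_const two_pos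
  unfold gaussDensity
  simpa using (tendsto_exp_atBot.comp h).const_mul ((2 * π) ^ (-(1 : ℝ) / 2))

theorem integrable_gaussDensity : Integrable gaussDensity := by
  convert (integrable_exp_neg_mul_sq (by norm_num : (0 : ℝ) < 1 / 2)).const_mul
    ((2 * π) ^ (-(1 : ℝ) / 2)) using 2 with t
  rw [gaussDensity]
  ring_nf

theorem integrable_mul_gaussDensity : Integrable fun t => t * gaussDensity t := by
  convert (integrable_mul_exp_neg_mul_sq (by norm_num : (0 : ℝ) < 1 / 2)).const_mul
    ((2 * π) ^ (-(1 : ℝ) / 2)) using 2 with t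
  rw [gaussDensity]
  ring_nf

theorem integral_Ioi_mul_gaussDensity (x : ℝ) :
    ∫ t in Ioi x, t * gaussDensity t = gaussDensity x := by
  have h := integral_Ioi_of_hasDerivAt_of_tendsto
    (hasDerivAt_gaussDensity x).neg.continuousAt.continuousWithinAt
    (fun t _ => (hasDerivAt_gaussDensity t).neg)
    (by simpa using integrable_mul_gaussDensity.integrableOn) tendsto_gaussDensity_atTop.neg
  simpa using h

theorem setIntegral_Ioi_pos {f : ℝ → ℝ} {a : ℝ} (hf : IntegrableOn f (Ioi a))
    (hpos : ∀ x ∈ Ioi a, 0 < f x) : 0 < ∫ x in Ioi a, f x := by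
  rw [setIntegral_pos_iff_support_of_nonneg_ae
    ((ae_restrict_iff' measurableSet_Ioi).2 (.of_forall fun x hx => (hpos x hx).le)) hf,
    show Function.support f ∩ Ioi a = Ioi a from inter_eq_right.2 fun x hx => (hpos x hx).ne',
    volume_Ioi]
  exact ENNReal.zero_lt_top

theorem gaussQ_pos (x : ℝ) : 0 < gaussQ x :=
  setIntegral_Ioi_pos integrable_gaussDensity.integrableOn fun t _ => gaussDensity_pos t

theorem gaussQ_antitone : Antitone gaussQ := fun _ _ hxy =>
  setIntegral_mono_set integrable_gaussDensity.integrableOn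
    (.of_forall fun t => (gaussDensity_pos t).le) (Ioi_subset_Ioi hxy).eventuallyLE

theorem mul_gaussQ_lt_gaussDensity (x : ℝ) : x * gaussQ x < gaussDensity x := by
  have hpos : 0 < ∫ t in Ioi x, t * gaussDensity t - x * gaussDensity t :=
    setIntegral_Ioi_pos (integrable_mul_gaussDensity.sub
      (integrable_gaussDensity.const_mul x)).integrableOn
      fun t ht => by nlinarith [gaussDensity_pos t, mem_Ioi.1 ht]
  rw [integral_sub integrable_mul_gaussDensity.integrableOn
    (integrable_gaussDensity.const_mul x).integrableOn, integral_const_mul,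
    integral_Ioi_mul_gaussDensity] at hpos
  rw [gaussQ_eq_integral_gaussDensity]
  linarith

theorem millsRatio_pos (x : ℝ) : 0 < millsRatio x :=
  div_pos (gaussQ_pos x) (gaussDensity_pos x)

theorem mul_millsRatio_lt_one (x : ℝ) : x * millsRatio x < 1 := by
  rw [millsRatio, ← mul_div_assoc, div_lt_one (gaussDensity_pos x)]
  exact mul_gaussQ_lt_gaussDensity x

theorem strictAnti_intervalIntegral_pow {f : ℝ → ℝ} {a b : ℝ} (hab : a < b)
    (hf : Measurable f) (hf01 : ∀ x ∈ Ioc a b, 0 < f x ∧ f x < 1) :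
    StrictAnti fun n : ℕ => ∫ x in a..b, f x ^ n := by
  have hint (n : ℕ) : IntervalIntegrable (fun x => f x ^ n) volume a b := by
    rw [intervalIntegrable_iff_integrableOn_Ioc_of_le hab.le]
    refine Measure.integrableOn_of_bounded (M := 1) measure_Ioc_lt_top.ne
      (hf.pow_const n).aestronglyMeasurable
      ((ae_restrict_iff' measurableSet_Ioc).2 (.of_forall fun x hx => ?_))
    obtain ⟨h0, h1⟩ := hf01 x hx
    rw [norm_pow, norm_of_nonneg h0.le]
    exact pow_le_one₀ h0.le h1.le
  refine strictAnti_nat_of_succ_lt fun n => ?_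
  have hpos : 0 < ∫ x in a..b, f x ^ n - f x ^ (n + 1) :=
    intervalIntegral.intervalIntegral_pos_of_pos_on ((hint n).sub (hint (n + 1)))
      (fun x hx => by
        obtain ⟨h0, h1⟩ := hf01 x (Ioo_subset_Ioc_self hx)
        rw [sub_pos, pow_succ]
        exact mul_lt_of_lt_one_right (pow_pos h0 n) h1)
      hab
  rw [intervalIntegral.integral_sub (hint n) (hint (n + 1))] at hpos
  linarith

/-- for `c > 0` and
`B(φ) = √(8πc) sinφ exp(2c sin²φ) Q(2√c sinφ)`, one has `0 < B(φ) < 1` for all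
`φ ∈ (0, π/2]`, and the average error probability
`n ↦ (1/π)∫_0^{π/2} B(φ)ⁿ dφ` is strictly decreasing in `n ∈ ℕ`. -/
theorem stmt_13 (c : ℝ) (hc : 0 < c)
    (B : ℝ → ℝ)
    (hB : ∀ φ, B φ = Real.sqrt (8 * Real.pi * c) * Real.sin φ *
      Real.exp (2 * c * Real.sin φ ^ 2) * gaussQ (2 * Real.sqrt c * Real.sin φ)) :
    (∀ φ : ℝ, 0 < φ → φ ≤ Real.pi / 2 → 0 < B φ ∧ B φ < 1) ∧
    StrictAnti (fun n : ℕ =>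
      (1 / Real.pi) * ∫ φ in (0 : ℝ)..(Real.pi / 2), (B φ) ^ n) := by
  have hB_mills (φ : ℝ) :
      B φ = 2 * √c * sin φ * millsRatio (2 * √c * sin φ) := by
    have hsqrt : √(8 * π * c) = 2 * √c * √(2 * π) := by
      rw [show 8 * π * c = 2 ^ 2 * c * (2 * π) by ring, sqrt_mul (by positivity),
        sqrt_mul (by positivity), sqrt_sq two_pos.le]
    have hexp : (2 * √c * sin φ) ^ 2 / 2 = 2 * c * sin φ ^ 2 := by
      rw [mul_pow, mul_pow, sq_sqrt hc.le]; ring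
    rw [hB, millsRatio, div_eq_mul_inv, inv_gaussDensity, hexp, hsqrt]
    ring
  have hbounds (φ : ℝ) (hφ : φ ∈ Ioc 0 (π / 2)) : 0 < B φ ∧ B φ < 1 := by
    have hx : 0 < 2 * √c * sin φ := mul_pos (by positivity)
      (sin_pos_of_pos_of_lt_pi hφ.1 (hφ.2.trans_lt (by linarith [pi_pos])))
    rw [hB_mills]
    exact ⟨mul_pos hx (millsRatio_pos _), mul_millsRatio_lt_one _⟩
  have hB_meas : Measurable B := by
    rw [funext hB]
    exact (by fun_prop : Measurable _).mul (gaussQ_antitone.measurable.comp (by fun_prop))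
  refine ⟨fun φ h0 h1 => hbounds φ ⟨h0, h1⟩, ?_⟩
  exact (strictMono_mul_left_of_pos (by positivity)).comp_strictAnti
    (strictAnti_intervalIntegral_pow (by positivity) hB_meas hbounds)
end

section
/- Fix n ≥ 1, positive reals aᵢ, bᵢ, ξᵢ for i ∈ {1,…,n}, and P_tot > 0, P_max > 0. Suppose λ > 0 and z ∈ ℝⁿ satisfy ∑ᵢ ξᵢ zᵢ = P_tot and, for each i, one of the following holds: (i) zᵢ = 0 and aᵢ/(bᵢ ξᵢ) ≤ λ; (ii) zᵢ = P_max/ξᵢ and λ ≤ aᵢ bᵢ ξᵢ/(P_max + bᵢ ξᵢ)²; or (iii) 0 ≤ zᵢ ≤ P_max/ξᵢ and zᵢ = √(aᵢ bᵢ/(ξᵢ λ)) − bᵢ. Then z minimizes ∑_{i=1}^n aᵢ bᵢ/(wᵢ + bᵢ) over the feasible set {w ∈ ℝⁿ : 0 ≤ wᵢ and ξᵢ wᵢ ≤ P_max for all i, and ∑ᵢ ξᵢ wᵢ ≤ P_tot}. -/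
open Finset

lemma wf_key (A B xi lam Pmax zv wv : ℝ) (hA : 0 < A) (hB : 0 < B)
    (hxi : 0 < xi) (hlam : 0 < lam) (hPmax : 0 < Pmax)
    (hw0 : 0 ≤ wv) (hwP : xi * wv ≤ Pmax)
    (hc : (zv = 0 ∧ A / (B * xi) ≤ lam) ∨
      (zv = Pmax / xi ∧ lam ≤ A * B * xi / (Pmax + B * xi) ^ 2) ∨
      (0 ≤ zv ∧ zv ≤ Pmax / xi ∧ zv = Real.sqrt (A * B / (xi * lam)) - B)) :
    A * B / (zv + B) + lam * (xi * zv) ≤ A * B / (wv + B) + lam * (xi * wv) := by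
  have hwB : 0 < wv + B := by linarith
  have hzB : 0 < zv + B := by
    rcases hc with ⟨hz, _⟩ | ⟨hz, _⟩ | ⟨_, _, hz⟩
    · rw [hz]; linarith
    · rw [hz]; positivity
    · have hs : 0 < Real.sqrt (A * B / (xi * lam)) := Real.sqrt_pos.2 (by positivity)
      rw [hz]; linarith
  have hD : 0 < (wv + B) * (zv + B) := by positivity
  have key : A * B / (wv + B) - A * B / (zv + B)
      = A * B * (zv - wv) / ((wv + B) * (zv + B)) := by
    field_simp; ring
  have hgoal : lam * xi * (zv - wv) ≤ A * B * (zv - wv) / ((wv + B) * (zv + B)) := by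
    rw [le_div_iff₀ hD]
    rcases hc with ⟨hz, hl⟩ | ⟨hz, hl⟩ | ⟨hz0, hzP, hz⟩
    · subst hz
      have h1 : A ≤ lam * (B * xi) := by
        rw [div_le_iff₀ (by positivity)] at hl; linarith
      nlinarith [mul_nonneg (mul_nonneg hlam.le hxi.le) (mul_nonneg hw0 hw0),
        mul_le_mul_of_nonneg_right h1 (mul_nonneg hB.le hw0)]
    · have hzw : wv ≤ zv := by
        rw [hz, le_div_iff₀ hxi]; linarith [hwP]
      have h2 : lam * xi * (zv + B) ^ 2 ≤ A * B := by
        rw [le_div_iff₀ (by positivity : (0:ℝ) < (Pmax + B * xi) ^ 2)] at hl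
        have hP : Pmax = xi * zv := by rw [hz]; field_simp
        rw [hP] at hl
        nlinarith [hl, hxi]
      nlinarith [mul_nonneg (mul_nonneg (mul_nonneg hlam.le hxi.le)
          (sq_nonneg (zv - wv))) hzB.le,
        mul_le_mul_of_nonneg_right h2 (sub_nonneg.2 hzw)]
    · have hs0 : (0:ℝ) ≤ A * B / (xi * lam) := by positivity
      have hsq : Real.sqrt (A * B / (xi * lam)) ^ 2 = A * B / (xi * lam) :=
        Real.sq_sqrt hs0
      have hzs : zv + B = Real.sqrt (A * B / (xi * lam)) := by rw [hz]; ring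
      have heq : lam * xi * (zv + B) ^ 2 = A * B := by
        rw [hzs, hsq]; field_simp
      nlinarith [mul_nonneg (mul_nonneg (mul_nonneg hlam.le hxi.le)
          (sq_nonneg (zv - wv))) hzB.le]
  linarith [key, hgoal]

/-- generalized water-filling, Scenario B: if `λ > 0`,
`∑ᵢ ξᵢ zᵢ = P_tot`, and each coordinate satisfies one of the KKT cases
(i) `zᵢ = 0` and `aᵢ/(bᵢξᵢ) ≤ λ`; (ii) `zᵢ = P_max/ξᵢ` and
`λ ≤ aᵢbᵢξᵢ/(P_max + bᵢξᵢ)²`; (iii) `0 ≤ zᵢ ≤ P_max/ξᵢ` and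
`zᵢ = √(aᵢbᵢ/(ξᵢλ)) − bᵢ`, then `z` minimizes `∑ᵢ aᵢbᵢ/(wᵢ + bᵢ)` over
`{w : 0 ≤ wᵢ, ξᵢwᵢ ≤ P_max, ∑ᵢ ξᵢwᵢ ≤ P_tot}`. -/
theorem stmt_14 (n : ℕ) (hn : 1 ≤ n) (a b ξ : Fin n → ℝ) (Ptot Pmax : ℝ)
    (hPtot : 0 < Ptot) (hPmax : 0 < Pmax)
    (ha : ∀ i, 0 < a i) (hb : ∀ i, 0 < b i) (hξ : ∀ i, 0 < ξ i)
    (lam : ℝ) (hlam : 0 < lam) (z : Fin n → ℝ)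
    (hsum : ∑ i, ξ i * z i = Ptot)
    (hkkt : ∀ i,
      (z i = 0 ∧ a i / (b i * ξ i) ≤ lam) ∨
      (z i = Pmax / ξ i ∧ lam ≤ a i * b i * ξ i / (Pmax + b i * ξ i) ^ 2) ∨
      (0 ≤ z i ∧ z i ≤ Pmax / ξ i ∧
        z i = Real.sqrt (a i * b i / (ξ i * lam)) - b i)) :
    ∀ w : Fin n → ℝ, (∀ i, 0 ≤ w i) → (∀ i, ξ i * w i ≤ Pmax) →
      ∑ i, ξ i * w i ≤ Ptot →
      ∑ i, a i * b i / (z i + b i) ≤ ∑ i, a i * b i / (w i + b i) := by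
  intro w hw0 hwP hwsum
  have h1 : ∑ i, (a i * b i / (z i + b i) + lam * (ξ i * z i))
      ≤ ∑ i, (a i * b i / (w i + b i) + lam * (ξ i * w i)) :=
    Finset.sum_le_sum fun i _ =>
      wf_key (a i) (b i) (ξ i) lam Pmax (z i) (w i) (ha i) (hb i) (hξ i)
        hlam hPmax (hw0 i) (hwP i) (hkkt i)
  rw [Finset.sum_add_distrib, Finset.sum_add_distrib, ← Finset.mul_sum,
    ← Finset.mul_sum, hsum] at h1
  nlinarith [mul_le_mul_of_nonneg_left hwsum hlam.le]
end
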